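/- Let f : ℝ^{m×n} → ℝ be differentiable with ‖∇f(X) − ∇f(Y)‖_* ≤ L_* ‖X − Y‖ for all X, Y ∈ ℝ^{m×n} and some L_* > 0. Let X, M ∈ ℝ^{m×n}, η > 0, and let O ∈ ℝ^{m×n} satisfy ‖O‖ ≤ 1 and ⟨M, O⟩ = ‖M‖_* (as holds for O = msgn(M)). Set X⁺ = X − ηO. Then f(X⁺) ≤ f(X) − η‖∇f(X)‖_* + 2η‖∇f(X) − M‖_* + L_* η²/2. -/

import Mathlib

open Matrix MeasureTheory

/-- Trace inner product `⟨A,B⟩ = tr(AᵀB) = ∑ᵢⱼ Aᵢⱼ Bᵢⱼ`. -/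
def dotp {m n : ℕ} (A B : Matrix (Fin m) (Fin n) ℝ) : ℝ :=
  ∑ i, ∑ j, A i j * B i j

/-- Frobenius norm `‖A‖_F = ⟨A,A⟩^{1/2}`. -/
noncomputable def frobNorm {m n : ℕ} (A : Matrix (Fin m) (Fin n) ℝ) : ℝ :=
  Real.sqrt (dotp A A)

/-- Spectral norm: the `ℓ²→ℓ²` operator norm. -/
noncomputable def specNorm {m n : ℕ} (A : Matrix (Fin m) (Fin n) ℝ) : ℝ :=
  ‖LinearMap.toContinuousLinearMap (Matrix.toEuclideanLin A)‖

/-- Nuclear norm: the trace of `(AᵀA)^{1/2}`. -/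
noncomputable def nucNorm {m n : ℕ} (A : Matrix (Fin m) (Fin n) ℝ) : ℝ :=
  ((Matrix.posSemidef_conjTranspose_mul_self A).1.eigenvectorUnitary.1 *
    diagonal ((RCLike.ofReal : ℝ → ℝ) ∘ Real.sqrt ∘ (Matrix.posSemidef_conjTranspose_mul_self A).1.eigenvalues) *
    (star (Matrix.posSemidef_conjTranspose_mul_self A).1.eigenvectorUnitary : Matrix (Fin n) (Fin n) ℝ)).trace

attribute [local instance] Matrix.frobeniusNormedAddCommGroup Matrix.frobeniusNormedSpace

/-- The gradient of `f : ℝ^{m×n} → ℝ` at `X`, i.e. the matrix representing the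
derivative of `f` at `X` with respect to the trace inner product. -/
noncomputable def grad {m n : ℕ} (f : Matrix (Fin m) (Fin n) ℝ → ℝ)
    (X : Matrix (Fin m) (Fin n) ℝ) : Matrix (Fin m) (Fin n) ℝ :=
  fun i j => fderiv ℝ f X (Matrix.single i j 1)

/-! ### Auxiliary lemmas -/

section Aux

variable {m n : ℕ}

lemma specNorm_nonneg' (A : Matrix (Fin m) (Fin n) ℝ) : 0 ≤ specNorm A :=
  norm_nonneg _

lemma euclidnorm_eq' {k : ℕ} (v : Fin k → ℝ) :
    ‖(WithLp.equiv 2 (Fin k → ℝ)).symm v‖ = Real.sqrt (∑ i, v i ^ 2) := by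
  rw [EuclideanSpace.norm_eq]
  congr 1
  refine Finset.sum_congr rfl fun i _ => ?_
  simp [sq_abs]

lemma mulVec_norm_le' (A : Matrix (Fin m) (Fin n) ℝ) (v : Fin n → ℝ) :
    Real.sqrt (∑ k, (A *ᵥ v) k ^ 2) ≤ specNorm A * Real.sqrt (∑ k, v k ^ 2) := by
  have h := (LinearMap.toContinuousLinearMap (Matrix.toEuclideanLin A)).le_opNorm
    ((WithLp.equiv 2 (Fin n → ℝ)).symm v)
  simpa [LinearMap.coe_toContinuousLinearMap', Matrix.toEuclideanLin_apply_piLp_toLp,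
    euclidnorm_eq', specNorm, EuclideanSpace.norm_eq, Real.norm_eq_abs, sq_abs] using h

lemma abs_dot_mulVec_le' (A : Matrix (Fin m) (Fin n) ℝ) (u : Fin m → ℝ) (v : Fin n → ℝ) :
    |∑ k, u k * (A *ᵥ v) k| ≤ specNorm A * Real.sqrt (∑ k, u k ^ 2) * Real.sqrt (∑ j, v j ^ 2) := by
  have cs := abs_real_inner_le_norm ((WithLp.equiv 2 (Fin m → ℝ)).symm u)
    ((WithLp.equiv 2 (Fin m → ℝ)).symm (A *ᵥ v))
  have hinner : (inner ℝ ((WithLp.equiv 2 (Fin m → ℝ)).symm u)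
      ((WithLp.equiv 2 (Fin m → ℝ)).symm (A *ᵥ v)) : ℝ) = ∑ k, u k * (A *ᵥ v) k := by
    rw [PiLp.inner_apply]
    simp [mul_comm]
  rw [hinner, euclidnorm_eq', euclidnorm_eq'] at cs
  refine cs.trans ?_
  rw [mul_comm (specNorm A) _, mul_assoc]
  refine mul_le_mul_of_nonneg_left ?_ (Real.sqrt_nonneg _)
  exact mulVec_norm_le' A v

lemma specNorm_le_of_bound' (A : Matrix (Fin m) (Fin n) ℝ) (c : ℝ) (hc : 0 ≤ c)
    (h : ∀ v : Fin n → ℝ, Real.sqrt (∑ k, (A *ᵥ v) k ^ 2) ≤ c * Real.sqrt (∑ k, v k ^ 2)) :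
    specNorm A ≤ c := by
  refine ContinuousLinearMap.opNorm_le_bound _ hc fun x => ?_
  have hx : ‖x‖ = Real.sqrt (∑ i, ((WithLp.equiv 2 (Fin n → ℝ)) x) i ^ 2) := by
    rw [← euclidnorm_eq']; congr 1
  have := h ((WithLp.equiv 2 (Fin n → ℝ)) x)
  rw [← hx] at this
  simpa [LinearMap.coe_toContinuousLinearMap', Matrix.toEuclideanLin_apply, euclidnorm_eq',
    EuclideanSpace.norm_eq, Real.norm_eq_abs, sq_abs]
    using this

lemma specNorm_smul' (c : ℝ) (A : Matrix (Fin m) (Fin n) ℝ) :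
    specNorm (c • A) = |c| * specNorm A := by
  unfold specNorm
  have h1 : Matrix.toEuclideanLin (c • A) = c • Matrix.toEuclideanLin A :=
    map_smul (Matrix.toEuclideanLin (𝕜 := ℝ) (m := Fin m) (n := Fin n)) c A
  rw [h1, _root_.map_smul]
  rw [norm_smul c (LinearMap.toContinuousLinearMap (Matrix.toEuclideanLin A)), Real.norm_eq_abs]

lemma svd_package' (A : Matrix (Fin m) (Fin n) ℝ) :
    ∃ (W : Matrix (Fin m) (Fin n) ℝ) (V : Matrix (Fin n) (Fin n) ℝ) (σ : Fin n → ℝ),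
      (∀ i, 0 ≤ σ i) ∧ Vᵀ * V = 1 ∧ V * Vᵀ = 1 ∧
      Wᵀ * W = diagonal (fun i => if σ i = 0 then (0:ℝ) else 1) ∧
      A = W * diagonal σ * Vᵀ ∧ nucNorm A = ∑ i, σ i := by
  have hA : (Aᴴ * A).PosSemidef := Matrix.posSemidef_conjTranspose_mul_self A
  set V : Matrix (Fin n) (Fin n) ℝ := hA.1.eigenvectorUnitary.1 with hVdef
  set lam : Fin n → ℝ := hA.1.eigenvalues with hlamdef
  have hlam : ∀ i, 0 ≤ lam i := hA.eigenvalues_nonneg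
  set σ : Fin n → ℝ := fun i => Real.sqrt (lam i) with hσdef
  have hσlam : ∀ i, σ i ^ 2 = lam i := fun i => Real.sq_sqrt (hlam i)
  have hσ0 : ∀ i, σ i = 0 ↔ lam i = 0 := fun i => by
    constructor
    · intro h; rw [← hσlam i, h]; ring
    · intro h; simp [hσdef, h]
  have hstar : star V = Vᵀ := by
    rw [Matrix.star_eq_conjTranspose, conjTranspose_eq_transpose_of_trivial]
  have hVtV : Vᵀ * V = 1 := by
    rw [← hstar]; exact (Matrix.mem_unitaryGroup_iff').mp hA.1.eigenvectorUnitary.2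
  have hVVt : V * Vᵀ = 1 := by
    rw [← hstar]; exact (Matrix.mem_unitaryGroup_iff).mp hA.1.eigenvectorUnitary.2
  have hAH : Aᴴ = Aᵀ := conjTranspose_eq_transpose_of_trivial A
  have hcoe : (RCLike.ofReal ∘ lam : Fin n → ℝ) = lam := by
    funext i; simp [RCLike.ofReal]
  have hspec : Aᵀ * A = V * diagonal lam * Vᵀ := by
    rw [← hAH]
    conv_lhs => rw [hA.1.spectral_theorem]
    rw [Unitary.conjStarAlgAut_apply, hstar, hcoe]
  have hmid : Vᵀ * (Aᵀ * A) * V = diagonal lam := by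
    rw [hspec]
    calc Vᵀ * (V * diagonal lam * Vᵀ) * V
        = (Vᵀ * V) * diagonal lam * (Vᵀ * V) := by simp only [Matrix.mul_assoc]
      _ = diagonal lam := by rw [hVtV, one_mul, mul_one]
  set σp : Fin n → ℝ := fun i => if σ i = 0 then 0 else (σ i)⁻¹ with hσpdef
  set ε : Fin n → ℝ := fun i => if σ i = 0 then (0:ℝ) else 1 with hεdef
  set W : Matrix (Fin m) (Fin n) ℝ := A * V * diagonal σp with hWdef
  have hdiagε : diagonal σp * diagonal lam * diagonal σp = diagonal ε := by
    rw [diagonal_mul_diagonal, diagonal_mul_diagonal]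
    refine congrArg diagonal (funext fun i => ?_)
    by_cases h : σ i = 0
    · simp [hσpdef, hεdef, h, (hσ0 i).mp h]
    · have hl : lam i = σ i * σ i := by rw [← hσlam i]; ring
      simp only [hσpdef, hεdef, if_neg h, hl]
      field_simp
  have hWtW : Wᵀ * W = diagonal ε := by
    rw [hWdef, transpose_mul, transpose_mul, diagonal_transpose]
    calc diagonal σp * (Vᵀ * Aᵀ) * (A * V * diagonal σp)
        = diagonal σp * (Vᵀ * (Aᵀ * A) * V) * diagonal σp := by simp only [Matrix.mul_assoc]
      _ = diagonal σp * diagonal lam * diagonal σp := by rw [hmid]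
      _ = diagonal ε := hdiagε
  have hz : (A * V * diagonal (fun i => 1 - ε i))ᴴ * (A * V * diagonal (fun i => 1 - ε i)) = 0 := by
    rw [conjTranspose_eq_transpose_of_trivial, transpose_mul, transpose_mul, diagonal_transpose]
    calc diagonal (fun i => 1 - ε i) * (Vᵀ * Aᵀ) * (A * V * diagonal (fun i => 1 - ε i))
        = diagonal (fun i => 1 - ε i) * (Vᵀ * (Aᵀ * A) * V) * diagonal (fun i => 1 - ε i) := by
          simp only [Matrix.mul_assoc]
      _ = diagonal (fun i => 1 - ε i) * diagonal lam * diagonal (fun i => 1 - ε i) := by rw [hmid]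
      _ = 0 := by
          rw [diagonal_mul_diagonal, diagonal_mul_diagonal]
          rw [show (fun i => (1 - ε i) * lam i * (1 - ε i)) = fun _ => (0:ℝ) from ?_]
          · exact diagonal_zero
          · funext i
            by_cases h : σ i = 0
            · simp [hεdef, h, (hσ0 i).mp h]
            · simp [hεdef, h]
  have hz2 : A * V * diagonal (fun i => 1 - ε i) = 0 :=
    Matrix.conjTranspose_mul_self_eq_zero.mp hz
  have hAVε : A * V * diagonal ε = A * V := by
    have h1 : diagonal ε + diagonal (fun i => 1 - ε i) = (1 : Matrix (Fin n) (Fin n) ℝ) := by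
      rw [diagonal_add, ← diagonal_one]
      exact congrArg diagonal (funext fun i => by simp)
    have hsum : A * V * diagonal ε + A * V * diagonal (fun i => 1 - ε i) = A * V := by
      rw [← Matrix.mul_add, h1, Matrix.mul_one]
    rw [hz2, add_zero] at hsum
    exact hsum
  have hWσ : W * diagonal σ = A * V := by
    rw [hWdef, Matrix.mul_assoc (A * V), diagonal_mul_diagonal]
    rw [show (fun i => σp i * σ i) = ε from ?_]
    · exact hAVε
    · funext i
      by_cases h : σ i = 0
      · simp [hσpdef, hεdef, h]
      · simp only [hσpdef, hεdef, if_neg h]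
        field_simp
  have hAfac : A = W * diagonal σ * Vᵀ := by
    rw [hWσ, Matrix.mul_assoc, hVVt, Matrix.mul_one]
  have hnuc : nucNorm A = ∑ i, σ i := by
    unfold nucNorm
    have hsqrt : ((Matrix.posSemidef_conjTranspose_mul_self A).1.eigenvectorUnitary.1 *
    diagonal ((RCLike.ofReal : ℝ → ℝ) ∘ Real.sqrt ∘ (Matrix.posSemidef_conjTranspose_mul_self A).1.eigenvalues) *
    (star (Matrix.posSemidef_conjTranspose_mul_self A).1.eigenvectorUnitary : Matrix (Fin n) (Fin n) ℝ))
        = V * diagonal σ * star V := by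
      rfl
    rw [hsqrt, Matrix.trace_mul_comm (V * diagonal σ) (star V), hstar, ← Matrix.mul_assoc,
      hVtV, one_mul, trace_diagonal]
  exact ⟨W, V, σ, fun i => Real.sqrt_nonneg _, hVtV, hVVt, hWtW, hAfac, hnuc⟩

lemma dotp_eq_trace' (A B : Matrix (Fin m) (Fin n) ℝ) :
    dotp A B = (Aᵀ * B).trace := by
  unfold dotp
  rw [Finset.sum_comm]
  simp [Matrix.trace, Matrix.diag, Matrix.mul_apply, Matrix.transpose_apply]

lemma trace_diagonal_mul' {k : ℕ} (d : Fin k → ℝ) (N : Matrix (Fin k) (Fin k) ℝ) :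
    (diagonal d * N).trace = ∑ i, d i * N i i := by
  simp [Matrix.trace, Matrix.diag, Matrix.mul_apply, Matrix.diagonal_apply, ite_mul,
    Finset.sum_ite_eq]

lemma nucNorm_nonneg' (A : Matrix (Fin m) (Fin n) ℝ) : 0 ≤ nucNorm A := by
  obtain ⟨W, V, σ, hσ, _, _, _, _, hnuc⟩ := svd_package' A
  rw [hnuc]
  exact Finset.sum_nonneg fun i _ => hσ i

lemma dotp_le_nuc_spec' (A B : Matrix (Fin m) (Fin n) ℝ) :
    dotp A B ≤ nucNorm A * specNorm B := by
  obtain ⟨W, V, σ, hσ, hVtV, hVVt, hWtW, hAfac, hnuc⟩ := svd_package' A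
  rw [dotp_eq_trace', hnuc]
  have hAT : Aᵀ = V * diagonal σ * Wᵀ := by
    rw [hAfac]
    simp [transpose_mul, diagonal_transpose, Matrix.mul_assoc]
  have htr : (Aᵀ * B).trace = ∑ i, σ i * (Wᵀ * B * V) i i := by
    rw [hAT]
    rw [show V * diagonal σ * Wᵀ * B = V * (diagonal σ * (Wᵀ * B)) from by
      simp only [Matrix.mul_assoc]]
    rw [Matrix.trace_mul_comm V (diagonal σ * (Wᵀ * B))]
    rw [show diagonal σ * (Wᵀ * B) * V = diagonal σ * (Wᵀ * B * V) from by
      simp only [Matrix.mul_assoc]]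
    exact trace_diagonal_mul' σ _
  rw [htr, Finset.sum_mul]
  refine Finset.sum_le_sum fun i _ => ?_
  have hWcol : ∑ k, (W k i) ^ 2 ≤ 1 := by
    have h1 : (Wᵀ * W) i i = ∑ k, (W k i) ^ 2 := by
      simp [Matrix.mul_apply, Matrix.transpose_apply, sq]
    have h2 : (Wᵀ * W) i i = if σ i = 0 then (0:ℝ) else 1 := by
      rw [hWtW, diagonal_apply_eq]
    rw [← h1, h2]
    split <;> norm_num
  have hVcol : ∑ l, (V l i) ^ 2 = 1 := by
    have h1 : (Vᵀ * V) i i = ∑ l, (V l i) ^ 2 := by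
      simp [Matrix.mul_apply, Matrix.transpose_apply, sq]
    rw [← h1, hVtV, Matrix.one_apply_eq]
  have hentry : (Wᵀ * B * V) i i ≤ specNorm B := by
    have he : (Wᵀ * B * V) i i = ∑ k, (W k i) * (B *ᵥ (fun l => V l i)) k := by
      rw [Matrix.mul_assoc]
      simp [Matrix.mul_apply, Matrix.transpose_apply, Matrix.mulVec, dotProduct]
    rw [he]
    refine le_trans (le_abs_self _) (le_trans (abs_dot_mulVec_le' B _ _) ?_)
    rw [hVcol, Real.sqrt_one, mul_one]
    have : Real.sqrt (∑ k, (W k i) ^ 2) ≤ 1 := by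
      rw [show (1:ℝ) = Real.sqrt 1 from (Real.sqrt_one).symm]
      exact Real.sqrt_le_sqrt hWcol
    calc specNorm B * Real.sqrt (∑ k, (W k i) ^ 2) ≤ specNorm B * 1 :=
          mul_le_mul_of_nonneg_left this (specNorm_nonneg' B)
      _ = specNorm B := mul_one _
  exact mul_le_mul_of_nonneg_left hentry (hσ i)

lemma exists_msgn' (A : Matrix (Fin m) (Fin n) ℝ) :
    ∃ O : Matrix (Fin m) (Fin n) ℝ, specNorm O ≤ 1 ∧ dotp A O = nucNorm A := by
  obtain ⟨W, V, σ, hσ, hVtV, hVVt, hWtW, hAfac, hnuc⟩ := svd_package' A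
  set ε : Fin n → ℝ := fun i => if σ i = 0 then (0:ℝ) else 1 with hεdef
  refine ⟨W * Vᵀ, ?_, ?_⟩
  · refine specNorm_le_of_bound' _ 1 zero_le_one fun v => ?_
    have key : ∑ k, ((W * Vᵀ) *ᵥ v) k ^ 2 ≤ ∑ k, v k ^ 2 := by
      set y : Fin n → ℝ := Vᵀ *ᵥ v with hydef
      have h0 : (W * Vᵀ) *ᵥ v = W *ᵥ y := by rw [← Matrix.mulVec_mulVec]
      have h1 : ∑ k, ((W * Vᵀ) *ᵥ v) k ^ 2 = (W *ᵥ y) ⬝ᵥ (W *ᵥ y) := by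
        rw [h0]; simp [dotProduct, sq]
      have h2 : (W *ᵥ y) ⬝ᵥ (W *ᵥ y) = y ⬝ᵥ ((Wᵀ * W) *ᵥ y) := by
        rw [← Matrix.mulVec_mulVec, dotProduct_mulVec y Wᵀ (W *ᵥ y),
          Matrix.vecMul_transpose]
      have h3 : y ⬝ᵥ ((Wᵀ * W) *ᵥ y) = ∑ i, y i * (ε i * y i) := by
        rw [hWtW]
        simp [dotProduct, Matrix.mulVec_diagonal, hεdef]
      have h4 : ∑ i, y i * (ε i * y i) ≤ ∑ i, y i ^ 2 := by
        refine Finset.sum_le_sum fun i _ => ?_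
        by_cases h : σ i = 0
        · simp [hεdef, h, sq_nonneg]
        · simp [hεdef, h, sq]
      have h5 : ∑ i, y i ^ 2 = v ⬝ᵥ ((V * Vᵀ) *ᵥ v) := by
        rw [show ∑ i, y i ^ 2 = y ⬝ᵥ y from by simp [dotProduct, sq]]
        rw [hydef, ← Matrix.mulVec_mulVec, dotProduct_mulVec v V (Vᵀ *ᵥ v),
          ← Matrix.mulVec_transpose]
      have h6 : v ⬝ᵥ ((V * Vᵀ) *ᵥ v) = ∑ k, v k ^ 2 := by
        rw [hVVt]; simp [dotProduct, sq]
      calc ∑ k, ((W * Vᵀ) *ᵥ v) k ^ 2 = y ⬝ᵥ ((Wᵀ * W) *ᵥ y) := by rw [h1, h2]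
        _ ≤ ∑ i, y i ^ 2 := h3 ▸ h4
        _ = ∑ k, v k ^ 2 := by rw [h5, h6]
    rw [one_mul]
    exact Real.sqrt_le_sqrt key
  · rw [dotp_eq_trace', hnuc]
    have hAT : Aᵀ = V * diagonal σ * Wᵀ := by
      rw [hAfac]; simp [transpose_mul, diagonal_transpose, Matrix.mul_assoc]
    rw [hAT]
    rw [show V * diagonal σ * Wᵀ * (W * Vᵀ) = V * (diagonal σ * (Wᵀ * W) * Vᵀ) from by
      simp only [Matrix.mul_assoc]]
    rw [Matrix.trace_mul_comm V (diagonal σ * (Wᵀ * W) * Vᵀ)]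
    rw [show diagonal σ * (Wᵀ * W) * Vᵀ * V = diagonal σ * ((Wᵀ * W) * (Vᵀ * V)) from by
      simp only [Matrix.mul_assoc]]
    rw [hVtV, Matrix.mul_one, hWtW, trace_diagonal_mul']
    refine Finset.sum_congr rfl fun i _ => ?_
    rw [diagonal_apply_eq]
    by_cases h : σ i = 0 <;> simp [hεdef, h]

lemma nucNorm_neg' (A : Matrix (Fin m) (Fin n) ℝ) : nucNorm (-A) = nucNorm A := by
  have key : ∀ (P Q : Matrix (Fin n) (Fin n) ℝ) (hP : P.PosSemidef) (hQ : Q.PosSemidef),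
      P = Q → (hP.1.eigenvectorUnitary.1 *
    diagonal ((RCLike.ofReal : ℝ → ℝ) ∘ Real.sqrt ∘ hP.1.eigenvalues) *
    (star hP.1.eigenvectorUnitary : Matrix (Fin n) (Fin n) ℝ)).trace = (hQ.1.eigenvectorUnitary.1 *
    diagonal ((RCLike.ofReal : ℝ → ℝ) ∘ Real.sqrt ∘ hQ.1.eigenvalues) *
    (star hQ.1.eigenvectorUnitary : Matrix (Fin n) (Fin n) ℝ)).trace := by
    rintro P Q hP hQ rfl; rfl
  unfold nucNorm
  exact key _ _ (Matrix.posSemidef_conjTranspose_mul_self (-A))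
    (Matrix.posSemidef_conjTranspose_mul_self A) (by simp)

lemma dotp_sub_left' (A B C : Matrix (Fin m) (Fin n) ℝ) :
    dotp (A - B) C = dotp A C - dotp B C := by
  simp [dotp, sub_mul, Finset.sum_sub_distrib]

lemma dotp_neg_right' (A B : Matrix (Fin m) (Fin n) ℝ) : dotp A (-B) = -dotp A B := by
  simp [dotp]

lemma dotp_smul_right' (c : ℝ) (A B : Matrix (Fin m) (Fin n) ℝ) :
    dotp A (c • B) = c * dotp A B := by
  simp only [dotp, Matrix.smul_apply, smul_eq_mul, Finset.mul_sum]
  refine Finset.sum_congr rfl fun i _ => Finset.sum_congr rfl fun j _ => by ring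

lemma fderiv_apply_eq' (f : Matrix (Fin m) (Fin n) ℝ → ℝ) (Y D : Matrix (Fin m) (Fin n) ℝ) :
    fderiv ℝ f Y D = dotp (grad f Y) D := by
  have hD : D = ∑ i, ∑ j, D i j • Matrix.single i j (1:ℝ) := by
    conv_lhs => rw [Matrix.matrix_eq_sum_single D]
    refine Finset.sum_congr rfl fun i _ => Finset.sum_congr rfl fun j _ => ?_
    rw [Matrix.smul_single, smul_eq_mul, mul_one]
  conv_lhs => rw [hD]
  rw [map_sum]
  unfold dotp grad
  refine Finset.sum_congr rfl fun i _ => ?_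
  rw [map_sum]
  refine Finset.sum_congr rfl fun j _ => ?_
  rw [(fderiv ℝ f Y).map_smul, smul_eq_mul, mul_comm]

end Aux

/-- Descent along a matrix-signed direction: if `f` is differentiable with
`‖∇f(X) − ∇f(Y)‖_* ≤ L_*‖X − Y‖`, and `O` satisfies `‖O‖ ≤ 1`, `⟨M, O⟩ = ‖M‖_*`
(as holds for `O = msgn(M)`), then with `X⁺ = X − ηO`,
`f(X⁺) ≤ f(X) − η‖∇f(X)‖_* + 2η‖∇f(X) − M‖_* + L_*η²/2`. -/
theorem stmt_9 {m n : ℕ} (f : Matrix (Fin m) (Fin n) ℝ → ℝ) (Lstar : ℝ) (hL : 0 < Lstar)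
    (hf : Differentiable ℝ f)
    (hlip : ∀ X Y, nucNorm (grad f X - grad f Y) ≤ Lstar * specNorm (X - Y))
    (X M O : Matrix (Fin m) (Fin n) ℝ) (η : ℝ) (hη : 0 < η)
    (hO : specNorm O ≤ 1) (hMO : dotp M O = nucNorm M) :
    f (X - η • O)
      ≤ f X - η * nucNorm (grad f X) + 2 * η * nucNorm (grad f X - M)
        + Lstar * η ^ 2 / 2 := by
  set D : Matrix (Fin m) (Fin n) ℝ := -(η • O) with hDdef
  have hXD : X - η • O = X + (1:ℝ) • D := by
    rw [hDdef]; simp [sub_eq_add_neg]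
  have hspecD : specNorm D ≤ η := by
    rw [hDdef, show -(η • O) = (-η) • O from by simp, specNorm_smul', abs_neg, abs_of_pos hη]
    calc η * specNorm O ≤ η * 1 := mul_le_mul_of_nonneg_left hO hη.le
      _ = η := mul_one η
  have hspecD0 : 0 ≤ specNorm D := specNorm_nonneg' D
  set g : ℝ → ℝ := fun t => f (X + t • D) with hgdef
  set g' : ℝ → ℝ := fun t => dotp (grad f (X + t • D)) D with hg'def
  have hg : ∀ t : ℝ, HasDerivAt g (g' t) t := by
    intro t
    have hline : HasDerivAt (fun s : ℝ => X + s • D) D t := by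
      exact (((hasDerivAt_id t).smul_const D).const_add X).congr_deriv (one_smul ℝ D)
    have := (hf (X + t • D)).hasFDerivAt.comp_hasDerivAt t hline
    rw [show g' t = fderiv ℝ f (X + t • D) D from (fderiv_apply_eq' f _ D).symm]
    exact this
  set K : ℝ := Lstar * specNorm D ^ 2 with hKdef
  have hK0 : 0 ≤ K := mul_nonneg hL.le (sq_nonneg _)
  have hslope : ∀ t : ℝ, 0 ≤ t → g' t ≤ g' 0 + K * t := by
    intro t ht
    have h1 : g' t - g' 0 = dotp (grad f (X + t • D) - grad f X) D := by
      rw [hg'def]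
      simp only [zero_smul, add_zero]
      rw [dotp_sub_left']
    have h2 : dotp (grad f (X + t • D) - grad f X) D
        ≤ nucNorm (grad f (X + t • D) - grad f X) * specNorm D := dotp_le_nuc_spec' _ _
    have h3 : nucNorm (grad f (X + t • D) - grad f X) ≤ Lstar * specNorm (X + t • D - X) :=
      hlip _ _
    have h4 : specNorm (X + t • D - X) = t * specNorm D := by
      rw [show X + t • D - X = t • D from by abel, specNorm_smul', abs_of_nonneg ht]
    have h5 : g' t - g' 0 ≤ Lstar * (t * specNorm D) * specNorm D := by
      rw [h1]
      refine h2.trans ?_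
      refine mul_le_mul_of_nonneg_right ?_ hspecD0
      rw [← h4]; exact h3
    have h6 : Lstar * (t * specNorm D) * specNorm D = K * t := by
      rw [hKdef]; ring
    linarith
  set φ : ℝ → ℝ := fun t => g t - t * g' 0 - K * t ^ 2 / 2 with hφdef
  have hφd : ∀ t : ℝ, HasDerivAt φ (g' t - g' 0 - K * t) t := by
    intro t
    have h1 : HasDerivAt (fun s : ℝ => s * g' 0) (g' 0) t := by
      simpa using (hasDerivAt_id t).mul_const (g' 0)
    have h2 : HasDerivAt (fun s : ℝ => K * s ^ 2 / 2) (K * t) t := by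
      have := ((hasDerivAt_pow 2 t).const_mul K).div_const 2
      exact this.congr_deriv (by push_cast; ring)
    exact ((hg t).sub h1).sub h2
  have hanti : AntitoneOn φ (Set.Icc (0:ℝ) 1) := by
    refine antitoneOn_of_deriv_nonpos (convex_Icc 0 1) ?_ ?_ ?_
    · have : Differentiable ℝ φ := fun t => (hφd t).differentiableAt
      exact this.continuous.continuousOn
    · intro x _
      exact ((hφd x).differentiableAt).differentiableWithinAt
    · intro x hx
      rw [(hφd x).deriv]
      rw [interior_Icc] at hx
      have := hslope x hx.1.le
      linarith
  have hfinal : φ 1 ≤ φ 0 :=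
    hanti (Set.left_mem_Icc.mpr zero_le_one) (Set.right_mem_Icc.mpr zero_le_one) zero_le_one
  have hφ1 : g 1 ≤ g 0 + g' 0 + K / 2 := by
    have e1 : φ 1 = g 1 - g' 0 - K / 2 := by rw [hφdef]; ring_nf
    have e0 : φ 0 = g 0 := by rw [hφdef]; ring_nf
    rw [e1, e0] at hfinal
    linarith
  -- bound g' 0
  set G : Matrix (Fin m) (Fin n) ℝ := grad f X with hGdef
  have hdual1 : dotp (M - G) O ≤ nucNorm (G - M) := by
    calc dotp (M - G) O ≤ nucNorm (M - G) * specNorm O := dotp_le_nuc_spec' _ _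
      _ ≤ nucNorm (M - G) * 1 := mul_le_mul_of_nonneg_left hO (nucNorm_nonneg' _)
      _ = nucNorm (G - M) := by rw [mul_one, ← nucNorm_neg' (G - M), neg_sub]
  have hdual2 : nucNorm G ≤ nucNorm (G - M) + nucNorm M := by
    obtain ⟨O', hO'spec, hO'dot⟩ := exists_msgn' G
    have e : dotp G O' = dotp (G - M) O' + dotp M O' := by
      rw [dotp_sub_left']; ring
    have b1 : dotp (G - M) O' ≤ nucNorm (G - M) := by
      calc dotp (G - M) O' ≤ nucNorm (G - M) * specNorm O' := dotp_le_nuc_spec' _ _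
        _ ≤ nucNorm (G - M) * 1 := mul_le_mul_of_nonneg_left hO'spec (nucNorm_nonneg' _)
        _ = nucNorm (G - M) := mul_one _
    have b2 : dotp M O' ≤ nucNorm M := by
      calc dotp M O' ≤ nucNorm M * specNorm O' := dotp_le_nuc_spec' _ _
        _ ≤ nucNorm M * 1 := mul_le_mul_of_nonneg_left hO'spec (nucNorm_nonneg' _)
        _ = nucNorm M := mul_one _
    rw [← hO'dot, e]
    linarith
  have hGO : nucNorm G - 2 * nucNorm (G - M) ≤ dotp G O := by
    have e : dotp G O = dotp M O - dotp (M - G) O := by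
      rw [dotp_sub_left']; ring
    rw [e, hMO]
    linarith
  have hg'0 : g' 0 ≤ -η * nucNorm G + 2 * η * nucNorm (G - M) := by
    have e : g' 0 = -η * dotp G O := by
      rw [hg'def]
      simp only [zero_smul, add_zero, hDdef]
      rw [dotp_neg_right', dotp_smul_right', ← hGdef]
      ring
    rw [e]
    have := mul_le_mul_of_nonneg_left hGO hη.le
    nlinarith
  have hKle : K / 2 ≤ Lstar * η ^ 2 / 2 := by
    have : specNorm D ^ 2 ≤ η ^ 2 := by nlinarith
    have : K ≤ Lstar * η ^ 2 := mul_le_mul_of_nonneg_left this hL.le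
    linarith
  have hg1 : g 1 = f (X - η • O) := by rw [hXD]
  have hg0 : g 0 = f X := by rw [hgdef]; simp
  rw [← hg1]
  calc g 1 ≤ g 0 + g' 0 + K / 2 := hφ1
    _ ≤ f X + (-η * nucNorm G + 2 * η * nucNorm (G - M)) + Lstar * η ^ 2 / 2 := by
        rw [hg0]; linarith
    _ = f X - η * nucNorm G + 2 * η * nucNorm (G - M) + Lstar * η ^ 2 / 2 := by ring
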